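/- Let Γ be a connected finite directed graph without self-loops with vertex set {1,…,N}, N ≥ 2, and let Γ'₁ ⊆ Γ₁ be a nonempty edge subset. Fix positive reals ξ_e for e ∈ Γ'₁ and s_e for e ∈ Γ₁ ∖ Γ'₁, and for ρ > 0 define weights t_e(ρ) = ρ ξ_e if e ∈ Γ'₁ and t_e(ρ) = s_e otherwise. Then for all 1 ≤ i, j ≤ N−1, the function ρ ↦ (M_Γ(t(ρ))^{−1})_{ij}, defined on (0, ∞), extends to a function on [0, ∞) that is C^∞ (smooth) on [0, ∞). -/

import Mathlib

open Finset

/-- Reachability between vertices generated by (the endpoints of) the edges in `S`: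
the equivalence relation generated by the pairs `(h e, t e)`, `e ∈ S`. -/
def Reach {V E : Type*} (hm tm : E → V) (S : Set E) : V → V → Prop :=
  Relation.EqvGen fun a b => ∃ e ∈ S, hm e = a ∧ tm e = b

/-- Incidence matrix entry: `1` if `i` is the head of `e`, `-1` if it is the tail,
`0` otherwise. -/
def inc {V E : Type*} [DecidableEq V] (hm tm : E → V) (e : E) (i : V) : ℝ :=
  if hm e = i then 1 else if tm e = i then -1 else 0

/-- Reduced weighted Laplacian `M_Γ(t)_{ij} = ∑_e ρ^e_i ρ^e_j / t_e`,
indexed by the first `n` of the `n + 1` vertices. -/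
noncomputable def lap {n : ℕ} {E : Type*} [Fintype E] (hm tm : E → Fin (n + 1))
    (w : E → ℝ) : Matrix (Fin n) (Fin n) ℝ :=
  Matrix.of fun i j => ∑ e, inc hm tm e i.castSucc * inc hm tm e j.castSucc / w e

/-- `T` is a spanning tree: it has `N - 1` edges and connects all vertices. -/
def IsSpanningTree {n : ℕ} {E : Type*} [Fintype E] (hm tm : E → Fin (n + 1))
    (T : Finset E) : Prop :=
  T.card = n ∧ ∀ a b : Fin (n + 1), Reach hm tm (↑T) a b

/-!
Writing `t(ρ)` for the weights of the statement, `M_Γ(t(ρ)) = ρ⁻¹ A + B` for fixed matrices `A`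
and `B`, so `M_Γ(t(ρ))⁻¹ = ρ (A + ρ B)⁻¹`, and Cramer's rule writes each entry as a quotient
`p(ρ) / q(ρ)` of real polynomials with `q(ρ) = det (A + ρ B) ≠ 0` for `ρ > 0`.
Lowering `ρ` only raises the quadratic form `x ↦ xᵀ M_Γ(t(ρ)) x`, so for `ρ ≤ 1` it stays above
`c ‖x‖²`, where `c > 0` is a coercivity constant of the positive definite `M_Γ(t(1))`; hence the
entries of the inverse are bounded by `c⁻¹` as `ρ → 0⁺`. A quotient of polynomials that is bounded
near `0⁺` has no pole at `0`: after cancelling the common power of `ρ` it is `ρ ^ d p₁ / q₁` with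
`q₁` nonvanishing on `[0, ∞)`, which is smooth there.
-/

open Matrix Polynomial Filter Topology

namespace Polynomial

theorem exists_eval_eq_pow_rootMultiplicity_mul {R : Type*} [CommRing R] {p : R[X]}
    (hp : p ≠ 0) :
    ∃ r : R[X], (∀ x, p.eval x = x ^ p.rootMultiplicity 0 * r.eval x) ∧ r.eval 0 ≠ 0 := by
  obtain ⟨r, hpr, hr⟩ := p.exists_eq_pow_rootMultiplicity_mul_and_not_dvd hp 0
  rw [C_0, sub_zero, X_dvd_iff, coeff_zero_eq_eval_zero] at hr
  refine ⟨r, fun x => ?_, hr⟩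
  conv_lhs => rw [hpr]
  simp

theorem rootMultiplicity_zero_le_of_isBoundedUnder {p q : ℝ[X]} (hp : p ≠ 0) (hq : q ≠ 0)
    (hbdd : IsBoundedUnder (· ≤ ·) (𝓝[>] 0) fun x => ‖p.eval x / q.eval x‖) :
    q.rootMultiplicity 0 ≤ p.rootMultiplicity 0 := by
  obtain ⟨p₁, hp₁, hp₁0⟩ := exists_eval_eq_pow_rootMultiplicity_mul hp
  obtain ⟨q₁, hq₁, hq₁0⟩ := exists_eval_eq_pow_rootMultiplicity_mul hq
  set a := p.rootMultiplicity 0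
  set b := q.rootMultiplicity 0
  by_contra! hab
  have hsmall : Tendsto (fun x => x ^ (b - a) * (p.eval x / q.eval x)) (𝓝[>] 0) (𝓝 0) :=
    ((continuous_pow _).tendsto' 0 0 (zero_pow (by omega))).mono_left nhdsWithin_le_nhds
      |>.zero_mul_isBoundedUnder_le hbdd
  have hlim : Tendsto (fun x => p₁.eval x / q₁.eval x) (𝓝[>] 0) (𝓝 (p₁.eval 0 / q₁.eval 0)) :=
    ((p₁.continuous.tendsto 0).div (q₁.continuous.tendsto 0) hq₁0).mono_left nhdsWithin_le_nhds
  have heq : (fun x => x ^ (b - a) * (p.eval x / q.eval x)) =ᶠ[𝓝[>] 0]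
      fun x => p₁.eval x / q₁.eval x := by
    filter_upwards [self_mem_nhdsWithin] with x (hx : 0 < x)
    rw [hp₁, hq₁, ← mul_div_assoc, ← mul_assoc, ← pow_add, Nat.sub_add_cancel hab.le,
      mul_div_mul_left _ _ (pow_ne_zero _ hx.ne')]
  exact div_ne_zero hp₁0 hq₁0 (tendsto_nhds_unique hlim (hsmall.congr' heq))

theorem exists_contDiffOn_Ici_eq_eval_div_eval {p q : ℝ[X]} (hq : ∀ x, 0 < x → q.eval x ≠ 0)
    (hbdd : IsBoundedUnder (· ≤ ·) (𝓝[>] 0) fun x => ‖p.eval x / q.eval x‖) (k : WithTop ℕ∞) :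
    ∃ g : ℝ → ℝ, ContDiffOn ℝ k g (Set.Ici 0) ∧ ∀ x, 0 < x → g x = p.eval x / q.eval x := by
  rcases eq_or_ne p 0 with rfl | hp
  · exact ⟨0, contDiffOn_const, fun x _ => by simp⟩
  have hq0 : q ≠ 0 := fun h => hq 1 one_pos (by simp [h])
  have hab := rootMultiplicity_zero_le_of_isBoundedUnder hp hq0 hbdd
  obtain ⟨p₁, hp₁, -⟩ := exists_eval_eq_pow_rootMultiplicity_mul hp
  obtain ⟨q₁, hq₁, hq₁0⟩ := exists_eval_eq_pow_rootMultiplicity_mul hq0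
  have hq₁_ne : ∀ x ∈ Set.Ici (0 : ℝ), q₁.eval x ≠ 0 := by
    rintro x (hx : 0 ≤ x)
    rcases hx.eq_or_lt with rfl | hx
    · exact hq₁0
    · exact right_ne_zero_of_mul (hq₁ x ▸ hq x hx)
  have hsmooth : ∀ r : ℝ[X], ContDiff ℝ k fun x => r.eval x := fun r => r.contDiff_aeval k
  obtain ⟨d, hd⟩ := Nat.exists_eq_add_of_le hab
  refine ⟨fun x => x ^ d * p₁.eval x / q₁.eval x,
    ((contDiff_id.pow _).mul (hsmooth p₁)).contDiffOn.div (hsmooth q₁).contDiffOn hq₁_ne,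
    fun x hx => ?_⟩
  rw [hp₁, hq₁, hd, pow_add, mul_assoc, mul_div_mul_left _ _ (pow_ne_zero _ hx.ne')]

end Polynomial

namespace Matrix

section Field

variable {m K : Type*} [Field K]

noncomputable def linearPencil (A B : Matrix m m K) : Matrix m m K[X] :=
  A.map C + (X : K[X]) • B.map C

theorem map_eval_linearPencil (A B : Matrix m m K) (x : K) :
    (linearPencil A B).map (eval x) = A + x • B := by
  ext i j
  simp [linearPencil, mul_comm _ x]

variable [Fintype m] [DecidableEq m]

theorem inv_smul_of_ne_zero (A : Matrix m m K) {k : K} (hk : k ≠ 0) : (k • A)⁻¹ = k⁻¹ • A⁻¹ := by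
  by_cases hA : IsUnit A.det
  · exact inv_smul' A (Units.mk0 k hk) hA
  · have hkA : ¬IsUnit (k • A).det := by
      simpa [det_smul, hk] using hA
    rw [nonsing_inv_apply_not_isUnit _ hA, nonsing_inv_apply_not_isUnit _ hkA, smul_zero]

theorem inv_apply_eq_adjugate_div (A : Matrix m m K) (i j : m) :
    A⁻¹ i j = A.adjugate i j / A.det := by
  rw [inv_def, smul_apply, smul_eq_mul, Ring.inverse_eq_inv', div_eq_inv_mul]

theorem eval_det_linearPencil (A B : Matrix m m K) (x : K) :
    (linearPencil A B).det.eval x = (A + x • B).det := by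
  rw [← map_eval_linearPencil, ← coe_evalRingHom, RingHom.map_det]
  rfl

theorem inv_add_smul_apply (A B : Matrix m m K) (x : K) (i j : m) :
    (A + x • B)⁻¹ i j =
      ((linearPencil A B).adjugate i j).eval x / (linearPencil A B).det.eval x := by
  have h := RingHom.map_adjugate (evalRingHom x) (linearPencil A B)
  rw [RingHom.mapMatrix_apply, RingHom.mapMatrix_apply, coe_evalRingHom,
    map_eval_linearPencil] at h
  rw [inv_apply_eq_adjugate_div, ← h, eval_det_linearPencil]
  rfl

end Field

section Coercive

variable {m : Type*} [Fintype m]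

theorem PosDef.exists_coercive {M : Matrix m m ℝ} (hM : M.PosDef) :
    ∃ c > 0, ∀ x : m → ℝ, c * ‖x‖ ^ 2 ≤ x ⬝ᵥ M *ᵥ x := by
  rcases isEmpty_or_nonempty m with hm | hm
  · exact ⟨1, one_pos, fun x => by simp [Subsingleton.elim x 0]⟩
  have hcont : Continuous fun x : m → ℝ => x ⬝ᵥ M *ᵥ x := by fun_prop
  obtain ⟨x₀, hx₀, hmin⟩ := (isCompact_sphere (0 : m → ℝ) 1).exists_isMinOn
    (NormedSpace.sphere_nonempty.mpr zero_le_one) hcont.continuousOn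
  refine ⟨x₀ ⬝ᵥ M *ᵥ x₀, hM.dotProduct_mulVec_pos (ne_zero_of_mem_unit_sphere ⟨x₀, hx₀⟩),
    fun x => ?_⟩
  rcases eq_or_ne x 0 with rfl | hx
  · simp
  have hnx : ‖x‖ ≠ 0 := norm_ne_zero_iff.mpr hx
  have hu : ‖x‖⁻¹ • x ∈ Metric.sphere (0 : m → ℝ) 1 := by
    simp [norm_smul, hnx]
  have := isMinOn_iff.mp hmin _ hu
  simp only [mulVec_smul, dotProduct_smul, smul_dotProduct, smul_eq_mul] at this
  calc x₀ ⬝ᵥ M *ᵥ x₀ * ‖x‖ ^ 2 ≤ ‖x‖⁻¹ * (‖x‖⁻¹ * (x ⬝ᵥ M *ᵥ x)) * ‖x‖ ^ 2 := by gcongr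
    _ = x ⬝ᵥ M *ᵥ x := by field_simp

theorem abs_inv_apply_le_of_coercive [DecidableEq m] {M : Matrix m m ℝ} {c : ℝ} (hc : 0 < c)
    (hM : ∀ x, c * ‖x‖ ^ 2 ≤ x ⬝ᵥ M *ᵥ x) (i j : m) : |M⁻¹ i j| ≤ c⁻¹ := by
  have hunit : IsUnit M := mulVec_injective_iff_isUnit.mp fun x y hxy => by
    have h := hM (x - y)
    rw [mulVec_sub, hxy, sub_self, dotProduct_zero] at h
    have : ‖x - y‖ ^ 2 ≤ 0 := le_of_mul_le_mul_left (by simpa using h) hc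
    exact sub_eq_zero.mp (norm_eq_zero.mp (pow_eq_zero_iff two_ne_zero |>.mp
      (le_antisymm this (sq_nonneg _))))
  set y := M⁻¹ *ᵥ Pi.single j 1
  have hMy : M *ᵥ y = Pi.single j 1 := by
    rw [mulVec_mulVec, mul_nonsing_inv _ ((isUnit_iff_isUnit_det M).mp hunit), one_mulVec]
  have hy : c * ‖y‖ ^ 2 ≤ ‖y‖ := calc
    c * ‖y‖ ^ 2 ≤ y ⬝ᵥ M *ᵥ y := hM y
    _ = y j := by rw [hMy, dotProduct_single, mul_one]
    _ ≤ ‖y‖ := (le_abs_self _).trans (norm_le_pi_norm y j)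
  calc |M⁻¹ i j| = |y i| := by simp [y, mulVec_single]
    _ ≤ ‖y‖ := norm_le_pi_norm y i
    _ ≤ c⁻¹ := by
      rcases (norm_nonneg y).eq_or_lt with h | h
      · rw [← h]
        positivity
      · rw [← one_div, le_div_iff₀ hc]
        nlinarith

end Coercive

end Matrix

theorem Reach.apply_eq {V E α : Type*} {hm tm : E → V} {S : Set E} {f : V → α}
    (hf : ∀ e ∈ S, f (hm e) = f (tm e)) {a b : V} (h : Reach hm tm S a b) : f a = f b :=
  congrArg (Quot.lift f fun _ _ ⟨e, he, ha, hb⟩ => ha ▸ hb ▸ hf e he) (Quot.eqvGen_sound h)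

theorem inc_eq_single_sub_single {V E : Type*} [DecidableEq V] (hm tm : E → V) {e : E}
    (he : hm e ≠ tm e) : inc hm tm e = Pi.single (hm e) 1 - Pi.single (tm e) 1 := by
  ext v
  by_cases h₁ : hm e = v
  · subst h₁
    simp [inc, he.symm]
  · by_cases h₂ : tm e = v <;> simp [inc, h₁, h₂]

def extendByZero {n : ℕ} (x : Fin n → ℝ) : Fin (n + 1) → ℝ := Fin.snoc x 0

@[simp] theorem extendByZero_castSucc {n : ℕ} (x : Fin n → ℝ) (i : Fin n) :
    extendByZero x i.castSucc = x i :=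
  Fin.snoc_castSucc ..

@[simp] theorem extendByZero_last {n : ℕ} (x : Fin n → ℝ) : extendByZero x (Fin.last n) = 0 :=
  Fin.snoc_last ..

section Laplacian

variable {n : ℕ} {E : Type*} (hm tm : E → Fin (n + 1))

def reducedInc (e : E) : Fin n → ℝ := fun i => inc hm tm e i.castSucc

theorem dotProduct_reducedInc {e : E} (he : hm e ≠ tm e) (x : Fin n → ℝ) :
    x ⬝ᵥ reducedInc hm tm e = extendByZero x (hm e) - extendByZero x (tm e) := by
  have : x ⬝ᵥ reducedInc hm tm e = extendByZero x ⬝ᵥ inc hm tm e := by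
    simp [dotProduct, reducedInc, Fin.sum_univ_castSucc]
  rw [this, inc_eq_single_sub_single hm tm he, dotProduct_sub, dotProduct_single,
    dotProduct_single, mul_one, mul_one]

variable [Fintype E]

theorem lap_eq_sum (w : E → ℝ) :
    lap hm tm w = ∑ e, (w e)⁻¹ • vecMulVec (reducedInc hm tm e) (reducedInc hm tm e) := by
  ext i j
  simp [lap, reducedInc, vecMulVec_apply, Matrix.sum_apply, div_eq_inv_mul]

theorem dotProduct_lap_mulVec (hloop : ∀ e, hm e ≠ tm e) (w : E → ℝ) (x : Fin n → ℝ) :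
    x ⬝ᵥ lap hm tm w *ᵥ x = ∑ e, (extendByZero x (hm e) - extendByZero x (tm e)) ^ 2 / w e := by
  rw [lap_eq_sum, sum_mulVec, dotProduct_sum]
  refine sum_congr rfl fun e _ => ?_
  rw [smul_mulVec, vecMulVec_mulVec, dotProduct_smul, dotProduct_smul,
    ← dotProduct_reducedInc hm tm (hloop e)]
  simp only [dotProduct_comm x, MulOpposite.smul_eq_mul_unop, MulOpposite.unop_op, smul_eq_mul]
  ring

theorem lap_posDef (hconn : ∀ a b : Fin (n + 1), Reach hm tm Set.univ a b)
    (hloop : ∀ e, hm e ≠ tm e) {w : E → ℝ} (hw : ∀ e, 0 < w e) : (lap hm tm w).PosDef := by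
  refine .of_dotProduct_mulVec_pos ?_ fun x hx => ?_
  · ext i j
    simp [lap, mul_comm]
  rw [star_trivial, dotProduct_lap_mulVec hm tm hloop]
  have hterm : ∀ e ∈ univ, 0 ≤ (extendByZero x (hm e) - extendByZero x (tm e)) ^ 2 / w e :=
    fun e _ => div_nonneg (sq_nonneg _) (hw e).le
  refine (sum_nonneg hterm).lt_of_ne fun h => hx (funext fun i => ?_)
  have hedge : ∀ e ∈ Set.univ, extendByZero x (hm e) = extendByZero x (tm e) := by
    intro e _
    have := (sum_eq_zero_iff_of_nonneg hterm).mp h.symm e (mem_univ e)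
    rw [div_eq_zero_iff, sq_eq_zero_iff, sub_eq_zero] at this
    exact this.resolve_right (hw e).ne'
  simpa using (hconn i.castSucc (Fin.last n)).apply_eq hedge

theorem dotProduct_lap_mulVec_le (hloop : ∀ e, hm e ≠ tm e) {w w' : E → ℝ}
    (hw : ∀ e, 0 < w e) (hww' : ∀ e, w e ≤ w' e) (x : Fin n → ℝ) :
    x ⬝ᵥ lap hm tm w' *ᵥ x ≤ x ⬝ᵥ lap hm tm w *ᵥ x := by
  rw [dotProduct_lap_mulVec hm tm hloop, dotProduct_lap_mulVec hm tm hloop]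
  exact sum_le_sum fun e _ => div_le_div_of_nonneg_left (sq_nonneg _) (hw e) (hww' e)

end Laplacian

def scaledWeights {E : Type*} [DecidableEq E] (S : Finset E) (ξ s : E → ℝ) (ρ : ℝ) : E → ℝ :=
  fun e => if e ∈ S then ρ * ξ e else s e

section ScaledWeights

variable {E : Type*} [DecidableEq E]

theorem scaledWeights_pos {S : Finset E} {ξ s : E → ℝ} (hξ : ∀ e, 0 < ξ e) (hs : ∀ e, 0 < s e)
    {ρ : ℝ} (hρ : 0 < ρ) (e : E) :
    0 < scaledWeights S ξ s ρ e := by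
  unfold scaledWeights
  split_ifs
  exacts [mul_pos hρ (hξ e), hs e]

theorem scaledWeights_le_scaledWeights {S : Finset E} {ξ s : E → ℝ} (hξ : ∀ e, 0 ≤ ξ e)
    {ρ ρ' : ℝ} (hρ : ρ ≤ ρ') (e : E) :
    scaledWeights S ξ s ρ e ≤ scaledWeights S ξ s ρ' e := by
  unfold scaledWeights
  split_ifs
  exacts [mul_le_mul_of_nonneg_right hρ (hξ e), le_rfl]

variable [Fintype E] {n : ℕ} (hm tm : E → Fin (n + 1))

theorem exists_lap_scaledWeights_eq_inv_smul_add (S : Finset E) (ξ s : E → ℝ) :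
    ∃ A B : Matrix (Fin n) (Fin n) ℝ, ∀ ρ : ℝ,
      lap hm tm (scaledWeights S ξ s ρ) = ρ⁻¹ • A + B := by
  refine ⟨∑ e ∈ S, (ξ e)⁻¹ • vecMulVec (reducedInc hm tm e) (reducedInc hm tm e),
    ∑ e ∈ Sᶜ, (s e)⁻¹ • vecMulVec (reducedInc hm tm e) (reducedInc hm tm e), fun ρ => ?_⟩
  rw [lap_eq_sum, ← sum_add_sum_compl S, smul_sum]
  congr 1 <;> refine sum_congr rfl fun e he => ?_
  · rw [scaledWeights, if_pos he, mul_inv, smul_smul]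
  · rw [scaledWeights, if_neg (mem_compl.mp he)]

variable {hm tm}

theorem exists_lap_scaledWeights_inv_apply_eq_eval_div
    (hconn : ∀ a b : Fin (n + 1), Reach hm tm Set.univ a b) (hloop : ∀ e, hm e ≠ tm e)
    (S : Finset E) {ξ s : E → ℝ} (hξ : ∀ e, 0 < ξ e) (hs : ∀ e, 0 < s e) (i j : Fin n) :
    ∃ p q : ℝ[X], ∀ ρ, 0 < ρ →
      q.eval ρ ≠ 0 ∧ (lap hm tm (scaledWeights S ξ s ρ))⁻¹ i j = p.eval ρ / q.eval ρ := by
  obtain ⟨A, B, hAB⟩ := exists_lap_scaledWeights_eq_inv_smul_add hm tm S ξ s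
  refine ⟨X * (linearPencil A B).adjugate i j, (linearPencil A B).det, fun ρ hρ => ?_⟩
  have hpencil : A + ρ • B = ρ • lap hm tm (scaledWeights S ξ s ρ) := by
    rw [hAB, smul_add, smul_smul, mul_inv_cancel₀ hρ.ne', one_smul]
  constructor
  · rw [eval_det_linearPencil, hpencil]
    exact ((lap_posDef hm tm hconn hloop (scaledWeights_pos hξ hs hρ)).smul hρ).det_pos.ne'
  · rw [eval_mul, eval_X, mul_div_assoc, ← inv_add_smul_apply, hpencil,
      inv_smul_of_ne_zero _ hρ.ne', Matrix.smul_apply, smul_eq_mul, mul_inv_cancel_left₀ hρ.ne']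

theorem exists_abs_lap_scaledWeights_inv_apply_le
    (hconn : ∀ a b : Fin (n + 1), Reach hm tm Set.univ a b) (hloop : ∀ e, hm e ≠ tm e)
    (S : Finset E) {ξ s : E → ℝ} (hξ : ∀ e, 0 < ξ e) (hs : ∀ e, 0 < s e) (i j : Fin n) :
    ∃ C, ∀ ρ, 0 < ρ → ρ ≤ 1 → |(lap hm tm (scaledWeights S ξ s ρ))⁻¹ i j| ≤ C := by
  obtain ⟨c, hc, hcoer⟩ :=
    (lap_posDef hm tm hconn hloop (scaledWeights_pos hξ hs one_pos)).exists_coercive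
  refine ⟨c⁻¹, fun ρ hρ hρ1 => abs_inv_apply_le_of_coercive hc (fun x => ?_) i j⟩
  exact (hcoer x).trans <| dotProduct_lap_mulVec_le hm tm hloop (scaledWeights_pos hξ hs hρ)
    (scaledWeights_le_scaledWeights (fun e => (hξ e).le) hρ1) x

end ScaledWeights

theorem lap_inverse_smooth_extension_general {n : ℕ} {E : Type*}
    [Fintype E] [DecidableEq E]
    (hm tm : E → Fin (n + 1))
    (hconn : ∀ a b : Fin (n + 1), Reach hm tm Set.univ a b)
    (hloop : ∀ e, hm e ≠ tm e)
    (S : Finset E)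
    (ξ s : E → ℝ) (hξ : ∀ e, 0 < ξ e) (hs : ∀ e, 0 < s e)
    (i j : Fin n) :
    ∃ g : ℝ → ℝ, ContDiffOn ℝ (⊤ : ℕ∞) g (Set.Ici 0) ∧
      ∀ ρ : ℝ, 0 < ρ →
        g ρ = (lap hm tm fun e => if e ∈ S then ρ * ξ e else s e)⁻¹ i j := by
  obtain ⟨p, q, hpq⟩ := exists_lap_scaledWeights_inv_apply_eq_eval_div hconn hloop S hξ hs i j
  obtain ⟨C, hC⟩ := exists_abs_lap_scaledWeights_inv_apply_le hconn hloop S hξ hs i j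
  have hbdd : IsBoundedUnder (· ≤ ·) (𝓝[>] 0) fun ρ => ‖p.eval ρ / q.eval ρ‖ := by
    refine isBoundedUnder_of_eventually_le (a := C) ?_
    filter_upwards [Ioc_mem_nhdsGT one_pos] with ρ ⟨hρ, hρ1⟩
    rw [← (hpq ρ hρ).2, Real.norm_eq_abs]
    exact hC ρ hρ hρ1
  obtain ⟨g, hg, hg_eq⟩ :=
    exists_contDiffOn_Ici_eq_eval_div_eval (fun ρ hρ => (hpq ρ hρ).1) hbdd _
  exact ⟨g, hg, fun ρ hρ => (hg_eq ρ hρ).trans (hpq ρ hρ).2.symm⟩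

theorem lap_inverse_smooth_extension {n : ℕ} (hn : 1 ≤ n) {E : Type*}
    [Fintype E] [DecidableEq E]
    (hm tm : E → Fin (n + 1))
    (hconn : ∀ a b : Fin (n + 1), Reach hm tm Set.univ a b)
    (hloop : ∀ e, hm e ≠ tm e)
    (S : Finset E) (hS : S.Nonempty)
    (ξ s : E → ℝ) (hξ : ∀ e, 0 < ξ e) (hs : ∀ e, 0 < s e)
    (i j : Fin n) :
    ∃ g : ℝ → ℝ, ContDiffOn ℝ (⊤ : ℕ∞) g (Set.Ici 0) ∧
      ∀ ρ : ℝ, 0 < ρ →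
        g ρ = (lap hm tm fun e => if e ∈ S then ρ * ξ e else s e)⁻¹ i j :=
  lap_inverse_smooth_extension_general hm tm hconn hloop S ξ s hξ hs i j
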